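/- arXiv:2503.22915 — 2 statements merged into one kernel-verified Lean document; each statement's English description precedes it below -/
import Mathlib

section
/- Fix constants ρ̄ > 0, p̄_ρ > 0, k̄ > 0, ν̄ > 0, λ̄ ∈ ℝ with 2ν̄ + λ̄ > 0, and ū₁, ū₂ ∈ ℝ. For ξ ∈ ℝ² with ξ ≠ 0, set ω = ξ/|ξ|, β(ξ) = p̄_ρ + k̄ρ̄|ξ|², and let A_S(ξ) and B̄_S(ξ) be as for the two-dimensional Navier–Stokes–Korteweg system: A_S(ξ) = [[ω₁ū₁+ω₂ū₂, ω₁√β(ξ), ω₂√β(ξ)], [ω₁√β(ξ), ω₁ū₁+ω₂ū₂, 0], [ω₂√β(ξ), 0, ω₁ū₁+ω₂ū₂]], B̄_S(ξ) = (1/ρ̄)[[0,0,0], [0, (2ν̄+λ̄)ω₁²+ν̄ω₂², (λ̄+ν̄)ω₁ω₂], [0, (λ̄+ν̄)ω₁ω₂, ν̄ω₁²+(2ν̄+λ̄)ω₂²]]. Define K̄_S(ξ) := ((2ν̄+λ̄)/(4 ρ̄ √β(ξ))) [[0, ω₁, ω₂], [−ω₁, 0, 0], [−ω₂, 0, 0]].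 Then K̄_S(ξ) is skew-symmetric for every ξ ≠ 0, and there exists a constant θ̄ > 0 (independent of ξ) such that [K̄_S(ξ) A_S(ξ)]^s + B̄_S(ξ) ≥ θ̄ I₃ for all ξ ≠ 0. -/
open Matrix

/-- The symmetric part `[M]ˢ = (1/2)(M + Mᵀ)` of a real square matrix. -/
noncomputable def symPart {n : ℕ} (M : Matrix (Fin n) (Fin n) ℝ) :
    Matrix (Fin n) (Fin n) ℝ :=
  (1 / 2 : ℝ) • (M + Mᵀ)

/-!
The transport term `ω·ū` sits on the diagonal of `A_S(ξ)`, so it only contributes a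
skew-symmetric part to `K̄_S(ξ) A_S(ξ)`. What remains carries a factor `√β(ξ)` that cancels
the `1/√β(ξ)` in `K̄_S(ξ)`, so with `a = (2ν̄+λ̄)/(4ρ̄)` the symmetric part
`[K̄_S A_S]ˢ = a (e₀e₀ᵀ - 0 ⊕ ωωᵀ)` does not depend on `|ξ|`. Adding `B̄_S` and writing
`x = (x₀, x')` gives the quadratic form `a x₀² + 3a (ω·x')² + (ν̄/ρ̄) (ω^⊥·x')²`,
so `θ̄ = min (ν̄/ρ̄) a` works.
-/

theorem Matrix.posSemidef_sub_smul_one_of_le {n : Type*} [Fintype n] [DecidableEq n]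
    {M : Matrix n n ℝ} (hM : M.IsHermitian) {θ : ℝ}
    (h : ∀ x : n → ℝ, θ * (x ⬝ᵥ x) ≤ x ⬝ᵥ M *ᵥ x) : (M - θ • 1).PosSemidef := by
  refine posSemidef_iff_dotProduct_mulVec.2
    ⟨hM.sub (isHermitian_one.smul (IsSelfAdjoint.all θ)), fun x => ?_⟩
  rw [star_trivial, sub_mulVec, dotProduct_sub, smul_mulVec, one_mulVec, dotProduct_smul,
    smul_eq_mul, sub_nonneg]
  exact h x

theorem div_sqrt_sq_add_div_sqrt_sq {a b : ℝ} (h : a ^ 2 + b ^ 2 ≠ 0) :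
    (a / √(a ^ 2 + b ^ 2)) ^ 2 + (b / √(a ^ 2 + b ^ 2)) ^ 2 = 1 := by
  rw [div_pow, div_pow, Real.sq_sqrt (by positivity), ← add_div, div_self h]

theorem sq_add_sq_ne_zero_of_ne_zero {ξ : Fin 2 → ℝ} (hξ : ξ ≠ 0) :
    ξ 0 ^ 2 + ξ 1 ^ 2 ≠ 0 := by
  contrapose! hξ
  have h0 : ξ 0 = 0 := by nlinarith [sq_nonneg (ξ 0), sq_nonneg (ξ 1)]
  have h1 : ξ 1 = 0 := by nlinarith [sq_nonneg (ξ 0), sq_nonneg (ξ 1)]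
  ext i
  fin_cases i <;> assumption

namespace NSK

variable (w₁ w₂ : ℝ)

def skewSymbol : Matrix (Fin 3) (Fin 3) ℝ :=
  !![0, w₁, w₂; -w₁, 0, 0; -w₂, 0, 0]

def hyperbolicSymbol (v s : ℝ) : Matrix (Fin 3) (Fin 3) ℝ :=
  !![v, w₁ * s, w₂ * s; w₁ * s, v, 0; w₂ * s, 0, v]

def viscousSymbol (ν lam : ℝ) : Matrix (Fin 3) (Fin 3) ℝ :=
  !![0, 0, 0;
     0, (2 * ν + lam) * w₁ ^ 2 + ν * w₂ ^ 2, (lam + ν) * w₁ * w₂;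
     0, (lam + ν) * w₁ * w₂, ν * w₁ ^ 2 + (2 * ν + lam) * w₂ ^ 2]

def compensationSymbol : Matrix (Fin 3) (Fin 3) ℝ :=
  !![w₁ ^ 2 + w₂ ^ 2, 0, 0; 0, -w₁ ^ 2, -(w₁ * w₂); 0, -(w₁ * w₂), -w₂ ^ 2]

theorem transpose_smul_skewSymbol (c : ℝ) :
    (c • skewSymbol w₁ w₂)ᵀ = -(c • skewSymbol w₁ w₂) := by
  ext i j
  fin_cases i <;> fin_cases j <;> simp [skewSymbol]

theorem symPart_smul_skewSymbol_mul_hyperbolicSymbol (c v s : ℝ) :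
    symPart (c • skewSymbol w₁ w₂ * hyperbolicSymbol w₁ w₂ v s) =
      (c * s) • compensationSymbol w₁ w₂ := by
  ext i j
  fin_cases i <;> fin_cases j <;>
    simp [symPart, skewSymbol, hyperbolicSymbol, compensationSymbol] <;> ring

theorem isHermitian_compensationSymbol_add_viscousSymbol (a ρ ν lam : ℝ) :
    (a • compensationSymbol w₁ w₂ + (1 / ρ) • viscousSymbol w₁ w₂ ν lam).IsHermitian := by
  ext i j
  fin_cases i <;> fin_cases j <;> simp [compensationSymbol, viscousSymbol]

theorem min_mul_dotProduct_self_le {ρ ν lam : ℝ} (hρ : 0 < ρ) (hlam : 0 < 2 * ν + lam)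
    (hw : w₁ ^ 2 + w₂ ^ 2 = 1) (x : Fin 3 → ℝ) :
    min (ν / ρ) ((2 * ν + lam) / (4 * ρ)) * (x ⬝ᵥ x) ≤
      x ⬝ᵥ (((2 * ν + lam) / (4 * ρ)) • compensationSymbol w₁ w₂ +
        (1 / ρ) • viscousSymbol w₁ w₂ ν lam) *ᵥ x := by
  set a := (2 * ν + lam) / (4 * ρ)
  set θ := min (ν / ρ) a
  set p := w₁ * x 1 + w₂ * x 2
  set q := w₂ * x 1 - w₁ * x 2
  have hnorm : x ⬝ᵥ x = x 0 ^ 2 + p ^ 2 + q ^ 2 := by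
    simp only [dotProduct, Fin.sum_univ_three, p, q]
    linear_combination (-(x 1 ^ 2 + x 2 ^ 2)) * hw
  have hform : x ⬝ᵥ (a • compensationSymbol w₁ w₂ + (1 / ρ) • viscousSymbol w₁ w₂ ν lam) *ᵥ x =
      a * x 0 ^ 2 + 3 * a * p ^ 2 + ν / ρ * q ^ 2 := by
    simp only [dotProduct, mulVec, compensationSymbol, viscousSymbol, smul_of, smul_cons,
      smul_eq_mul, smul_empty, mul_zero, mul_neg, one_div, Matrix.add_apply, of_apply, cons_val',
      cons_val_fin_one, Fin.sum_univ_three, Fin.isValue, cons_val_zero, cons_val_one, cons_val,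
      add_zero, zero_mul, zero_add, a, p, q]
    linear_combination (a * x 0 ^ 2) * hw
  have ha : 0 < a := by positivity
  have hθa : θ ≤ a := min_le_right _ _
  have hθν : θ ≤ ν / ρ := min_le_left _ _
  rw [hnorm, hform]
  nlinarith [sq_nonneg (x 0), sq_nonneg p, sq_nonneg q]

end NSK

/-- For the symmetrized symbols `A_S(ξ)`, `B̄_S(ξ)` of the linearized
two-dimensional Navier–Stokes–Korteweg system, the matrix
`K̄_S(ξ) = ((2ν̄+λ̄)/(4ρ̄√β(ξ))) [[0,ω₁,ω₂],[-ω₁,0,0],[-ω₂,0,0]]` is skew-symmetric for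
every `ξ ≠ 0` and there is a uniform constant `θ̄ > 0` with
`[K̄_S(ξ)A_S(ξ)]ˢ + B̄_S(ξ) ≥ θ̄ I₃` for all `ξ ≠ 0`. -/
theorem NSK_compensating_symbol (ρ pρ k ν lam u₁ u₂ : ℝ)
    (hρ : 0 < ρ) (hp : 0 < pρ) (hk : 0 < k) (hν : 0 < ν) (hlam : 0 < 2 * ν + lam) :
    let ω₁ : (Fin 2 → ℝ) → ℝ := fun ξ => ξ 0 / Real.sqrt (ξ 0 ^ 2 + ξ 1 ^ 2)
    let ω₂ : (Fin 2 → ℝ) → ℝ := fun ξ => ξ 1 / Real.sqrt (ξ 0 ^ 2 + ξ 1 ^ 2)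
    let β : (Fin 2 → ℝ) → ℝ := fun ξ => pρ + k * ρ * (ξ 0 ^ 2 + ξ 1 ^ 2)
    let AS : (Fin 2 → ℝ) → Matrix (Fin 3) (Fin 3) ℝ := fun ξ =>
      !![ω₁ ξ * u₁ + ω₂ ξ * u₂, ω₁ ξ * Real.sqrt (β ξ), ω₂ ξ * Real.sqrt (β ξ);
         ω₁ ξ * Real.sqrt (β ξ), ω₁ ξ * u₁ + ω₂ ξ * u₂, 0;
         ω₂ ξ * Real.sqrt (β ξ), 0, ω₁ ξ * u₁ + ω₂ ξ * u₂]
    let BS : (Fin 2 → ℝ) → Matrix (Fin 3) (Fin 3) ℝ := fun ξ =>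
      (1 / ρ) • !![0, 0, 0;
         0, (2 * ν + lam) * ω₁ ξ ^ 2 + ν * ω₂ ξ ^ 2, (lam + ν) * ω₁ ξ * ω₂ ξ;
         0, (lam + ν) * ω₁ ξ * ω₂ ξ, ν * ω₁ ξ ^ 2 + (2 * ν + lam) * ω₂ ξ ^ 2]
    let KS : (Fin 2 → ℝ) → Matrix (Fin 3) (Fin 3) ℝ := fun ξ =>
      ((2 * ν + lam) / (4 * ρ * Real.sqrt (β ξ))) •
        !![0, ω₁ ξ, ω₂ ξ; -ω₁ ξ, 0, 0; -ω₂ ξ, 0, 0]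
    (∀ ξ : Fin 2 → ℝ, ξ ≠ 0 → (KS ξ)ᵀ = -(KS ξ)) ∧
    (∃ θ : ℝ, 0 < θ ∧ ∀ ξ : Fin 2 → ℝ, ξ ≠ 0 →
      (symPart (KS ξ * AS ξ) + BS ξ - θ • (1 : Matrix (Fin 3) (Fin 3) ℝ)).PosSemidef) := by
  intro ω₁ ω₂ β AS BS KS
  refine ⟨fun ξ _ => NSK.transpose_smul_skewSymbol _ _ _,
    min (ν / ρ) ((2 * ν + lam) / (4 * ρ)), by positivity, fun ξ hξ => ?_⟩
  have hω : ω₁ ξ ^ 2 + ω₂ ξ ^ 2 = 1 :=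
    div_sqrt_sq_add_div_sqrt_sq (sq_add_sq_ne_zero_of_ne_zero hξ)
  have hβ : 0 < √(β ξ) := Real.sqrt_pos.2 (by positivity)
  have hsymbol : symPart (KS ξ * AS ξ) + BS ξ =
      ((2 * ν + lam) / (4 * ρ)) • NSK.compensationSymbol (ω₁ ξ) (ω₂ ξ) +
        (1 / ρ) • NSK.viscousSymbol (ω₁ ξ) (ω₂ ξ) ν lam := by
    have hcancel :
        (2 * ν + lam) / (4 * ρ * √(β ξ)) * √(β ξ) = (2 * ν + lam) / (4 * ρ) := by
      field_simp
    rw [← hcancel, ← NSK.symPart_smul_skewSymbol_mul_hyperbolicSymbol _ _ _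
      (ω₁ ξ * u₁ + ω₂ ξ * u₂)]
    rfl
  rw [hsymbol]
  exact posSemidef_sub_smul_one_of_le
    (NSK.isHermitian_compensationSymbol_add_viscousSymbol _ _ _ _ _ _)
    (NSK.min_mul_dotProduct_self_le _ _ hρ hlam hω)
end

section
/- Fix constants ρ̄ > 0, θ̄ > 0, p̄_ρ > 0, k̄ > 0, ν̄ > 0, λ̄ ∈ ℝ with 2ν̄ + λ̄ > 0, ᾱ > 0, ē_θ > 0, p̄_θ ∈ ℝ, and ū ∈ ℝ³. For ξ ∈ ℝ³ with ξ ≠ 0, set ω = ξ/|ξ|, β(ξ) = p̄_ρ + k̄ρ̄|ξ|², γ = √θ̄ p̄_θ/(√ē_θ ρ̄), and define the 5×5 real block matrices A_S(ξ) = [[ū·ω, √β(ξ) ωᵀ, 0], [√β(ξ) ω, (ū·ω) I₃, γ ω], [0, γ ωᵀ, ū·ω]] and B̄_S(ξ) = (1/ρ̄)[[0, 0, 0], [0, ν̄ I₃ + (ν̄+λ̄) ω⊗ω, 0], [0, 0, ᾱ/ē_θ]]. Then for every ξ ≠ 0: B̄_S(ξ) is positive semidefinite, its kernel equals span{(1,0,0,0,0)},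 and the pair (A_S(ξ), B̄_S(ξ)) is genuinely coupled, i.e., for every μ ∈ ℝ and every ψ ∈ ℝ⁵ with ψ ≠ 0 and B̄_S(ξ)ψ = 0, one has (μI + A_S(ξ))ψ ≠ 0. -/
/-!
On the velocity block, `ρ̄ B̄_S(ξ)` acts as `ν̄ I + (ν̄ + λ̄) ω ⊗ ω`, whose quadratic form
`ν̄ |v|² + (ν̄ + λ̄) (ω · v)²` lies, by Cauchy–Schwarz for the unit vector `ω`, above
`min(ν̄, 2ν̄ + λ̄) |v|²`; together with `ᾱ / ē_θ > 0` on the temperature entry this makes `B̄_S(ξ)`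
positive semidefinite and identifies its kernel as the density direction `e₀`, since a vector
annihilated by a positive semidefinite matrix makes its quadratic form vanish. As the kernel is a
line, genuine coupling only asks that `e₀` is not an eigenvector of `A_S(ξ)`, and indeed the
velocity part of `A_S(ξ) e₀` is `√β(ξ) ω ≠ 0`.
-/

open Matrix

/-- Genuine coupling of a pair of real matrices `(A, B)`: no eigenvector of `A`
lies in the kernel of `B`. -/
def GenuinelyCoupled {n : ℕ} (A B : Matrix (Fin n) (Fin n) ℝ) : Prop :=
  ∀ (μ : ℝ) (ψ : Fin n → ℝ), ψ ≠ 0 → B *ᵥ ψ = 0 →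
    (μ • (1 : Matrix (Fin n) (Fin n) ℝ) + A) *ᵥ ψ ≠ 0

theorem GenuinelyCoupled.of_ker_eq_span {n : ℕ} {A B : Matrix (Fin n) (Fin n) ℝ}
    {v : Fin n → ℝ} (hker : ∀ ψ, B *ᵥ ψ = 0 ↔ ∃ t : ℝ, ψ = t • v)
    (hv : ∀ μ : ℝ, (μ • (1 : Matrix (Fin n) (Fin n) ℝ) + A) *ᵥ v ≠ 0) :
    GenuinelyCoupled A B := by
  intro μ ψ hψ hB
  obtain ⟨t, rfl⟩ := (hker ψ).1 hB
  rw [mulVec_smul]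
  exact smul_ne_zero (left_ne_zero_of_smul hψ) (hv μ)

theorem sq_dotProduct_le {ι : Type*} [Fintype ι] (v w : ι → ℝ) :
    (v ⬝ᵥ w) ^ 2 ≤ (v ⬝ᵥ v) * (w ⬝ᵥ w) := by
  simpa only [dotProduct, ← sq] using Finset.sum_mul_sq_le_sq_mul_sq Finset.univ v w

theorem dotProduct_self_div_sqrt {ι : Type*} [Fintype ι] {ξ : ι → ℝ} (hξ : ξ ≠ 0) :
    (fun i => ξ i / √(ξ ⬝ᵥ ξ)) ⬝ᵥ (fun i => ξ i / √(ξ ⬝ᵥ ξ)) = 1 := by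
  have hne : ξ ⬝ᵥ ξ ≠ 0 := dotProduct_self_eq_zero.not.2 hξ
  have hnn : 0 ≤ ξ ⬝ᵥ ξ := dotProduct_self_star_nonneg ξ
  calc _ = ξ ⬝ᵥ ξ / (√(ξ ⬝ᵥ ξ) * √(ξ ⬝ᵥ ξ)) := by
        simp only [dotProduct, div_mul_div_comm, Finset.sum_div]
    _ = 1 := by rw [Real.mul_self_sqrt hnn, div_self hne]

theorem min_mul_dotProduct_self_le {ι : Type*} [Fintype ι] {ω : ι → ℝ} (hω : ω ⬝ᵥ ω = 1)
    (ν lam : ℝ) (v : ι → ℝ) :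
    min ν (2 * ν + lam) * (v ⬝ᵥ v) ≤ ν * (v ⬝ᵥ v) + (ν + lam) * (ω ⬝ᵥ v) ^ 2 := by
  have hcs : (ω ⬝ᵥ v) ^ 2 ≤ v ⬝ᵥ v := by simpa [hω] using sq_dotProduct_le ω v
  have hv : 0 ≤ v ⬝ᵥ v := dotProduct_self_star_nonneg v
  rcases le_total 0 (ν + lam) with h | h
  · nlinarith [min_le_left ν (2 * ν + lam), sq_nonneg (ω ⬝ᵥ v)]
  · nlinarith [min_le_right ν (2 * ν + lam)]

/-- `ρ̄ B̄_S(ξ)`, written in terms of `ω = ξ / |ξ|`. -/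
noncomputable def viscositySymbol (ν lam α eθ : ℝ) (ω : Fin 3 → ℝ) : Matrix (Fin 5) (Fin 5) ℝ :=
  !![0, 0, 0, 0, 0;
     0, ν + (ν + lam) * ω 0 ^ 2, (ν + lam) * ω 0 * ω 1, (ν + lam) * ω 0 * ω 2, 0;
     0, (ν + lam) * ω 1 * ω 0, ν + (ν + lam) * ω 1 ^ 2, (ν + lam) * ω 1 * ω 2, 0;
     0, (ν + lam) * ω 2 * ω 0, (ν + lam) * ω 2 * ω 1, ν + (ν + lam) * ω 2 ^ 2, 0;
     0, 0, 0, 0, α / eθ]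

/-- `A_S(ξ)`, with `c = ū · ω` and `s = √β(ξ)`. -/
def transportSymbol (c s γ : ℝ) (ω : Fin 3 → ℝ) : Matrix (Fin 5) (Fin 5) ℝ :=
  !![c, s * ω 0, s * ω 1, s * ω 2, 0;
     s * ω 0, c, 0, 0, γ * ω 0;
     s * ω 1, 0, c, 0, γ * ω 1;
     s * ω 2, 0, 0, c, γ * ω 2;
     0, γ * ω 0, γ * ω 1, γ * ω 2, c]

section viscositySymbol

variable (ν lam α eθ : ℝ) (ω : Fin 3 → ℝ)

theorem viscositySymbol_isHermitian : (viscositySymbol ν lam α eθ ω).IsHermitian := by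
  ext i j
  fin_cases i <;> fin_cases j <;> simp [viscositySymbol] <;> ring

theorem dotProduct_viscositySymbol_mulVec (x : Fin 5 → ℝ) :
    x ⬝ᵥ viscositySymbol ν lam α eθ ω *ᵥ x =
      ν * (![x 1, x 2, x 3] ⬝ᵥ ![x 1, x 2, x 3]) + (ν + lam) * (ω ⬝ᵥ ![x 1, x 2, x 3]) ^ 2
        + α / eθ * x 4 ^ 2 := by
  simp [viscositySymbol, dotProduct, mulVec, Fin.sum_univ_five, Fin.sum_univ_three]
  ring

variable {ν lam α eθ ω}

theorem viscositySymbol_posSemidef (hω : ω ⬝ᵥ ω = 1) (hν : 0 ≤ ν) (hlam : 0 ≤ 2 * ν + lam)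
    (hα : 0 ≤ α) (he : 0 ≤ eθ) : (viscositySymbol ν lam α eθ ω).PosSemidef := by
  refine posSemidef_iff_dotProduct_mulVec.2 ⟨viscositySymbol_isHermitian .., fun x => ?_⟩
  rw [star_trivial, dotProduct_viscositySymbol_mulVec]
  have hcoer := min_mul_dotProduct_self_le hω ν lam ![x 1, x 2, x 3]
  have hv : 0 ≤ min ν (2 * ν + lam) * (![x 1, x 2, x 3] ⬝ᵥ ![x 1, x 2, x 3]) :=
    mul_nonneg (le_min hν hlam) (dotProduct_self_star_nonneg _)
  have hx : 0 ≤ α / eθ * x 4 ^ 2 := mul_nonneg (div_nonneg hα he) (sq_nonneg (x 4))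
  linarith

theorem viscositySymbol_mulVec_eq_zero_iff (hω : ω ⬝ᵥ ω = 1) (hν : 0 < ν) (hlam : 0 < 2 * ν + lam)
    (hα : 0 < α) (he : 0 < eθ) (x : Fin 5 → ℝ) :
    viscositySymbol ν lam α eθ ω *ᵥ x = 0 ↔ ∃ t : ℝ, x = t • ![1, 0, 0, 0, 0] := by
  refine ⟨fun h => ?_, ?_⟩
  · rw [← (viscositySymbol_posSemidef hω hν.le hlam.le hα.le he.le).dotProduct_mulVec_zero_iff,
      star_trivial, dotProduct_viscositySymbol_mulVec] at h
    set v : Fin 3 → ℝ := ![x 1, x 2, x 3]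
    have hcoer := min_mul_dotProduct_self_le hω ν lam v
    have hm : 0 < min ν (2 * ν + lam) := lt_min hν hlam
    have ha : 0 < α / eθ := div_pos hα he
    have hv : 0 ≤ min ν (2 * ν + lam) * (v ⬝ᵥ v) :=
      mul_nonneg hm.le (dotProduct_self_star_nonneg v)
    have hx : 0 ≤ α / eθ * x 4 ^ 2 := mul_nonneg ha.le (sq_nonneg (x 4))
    have hv0 : v = 0 := dotProduct_self_eq_zero.1 <|
      (mul_eq_zero.1 (by linarith : min ν (2 * ν + lam) * (v ⬝ᵥ v) = 0)).resolve_left hm.ne'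
    have hx4 : x 4 = 0 := pow_eq_zero_iff two_ne_zero |>.1 <|
      (mul_eq_zero.1 (by linarith : α / eθ * x 4 ^ 2 = 0)).resolve_left ha.ne'
    have hx1 : x 1 = 0 := congrFun hv0 0
    have hx2 : x 2 = 0 := congrFun hv0 1
    have hx3 : x 3 = 0 := congrFun hv0 2
    refine ⟨x 0, funext fun i => ?_⟩
    fin_cases i <;> simp [hx1, hx2, hx3, hx4]
  · rintro ⟨t, rfl⟩
    ext i
    fin_cases i <;> simp [viscositySymbol, mulVec, dotProduct, Fin.sum_univ_five]

end viscositySymbol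

theorem transportSymbol_mulVec_ne_zero (μ c γ : ℝ) {s : ℝ} {ω : Fin 3 → ℝ} (hs : s ≠ 0)
    (hω : ω ≠ 0) :
    (μ • (1 : Matrix (Fin 5) (Fin 5) ℝ) + transportSymbol c s γ ω) *ᵥ ![1, 0, 0, 0, 0] ≠ 0 := by
  intro h
  apply hω
  funext i
  have := congrFun h i.castSucc.succ
  fin_cases i <;> simpa [transportSymbol, mulVec, dotProduct, Fin.sum_univ_five, hs] using this

theorem NSFK_genuinely_coupled_general (ρ θ₀ pρ k ν lam α eθ pθ : ℝ) (u : Fin 3 → ℝ)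
    (hρ : 0 < ρ) (hp : 0 < pρ) (hk : 0 < k) (hν : 0 < ν)
    (hlam : 0 < 2 * ν + lam) (hα : 0 < α) (he : 0 < eθ)
    (ξ : Fin 3 → ℝ) (hξ : ξ ≠ 0) :
    let nξ := Real.sqrt (ξ 0 ^ 2 + ξ 1 ^ 2 + ξ 2 ^ 2)
    let ω : Fin 3 → ℝ := fun i => ξ i / nξ
    let β := pρ + k * ρ * (ξ 0 ^ 2 + ξ 1 ^ 2 + ξ 2 ^ 2)
    let sβ := Real.sqrt β
    let γ := Real.sqrt θ₀ * pθ / (Real.sqrt eθ * ρ)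
    let uω := u 0 * ω 0 + u 1 * ω 1 + u 2 * ω 2
    let AS : Matrix (Fin 5) (Fin 5) ℝ :=
      !![uω, sβ * ω 0, sβ * ω 1, sβ * ω 2, 0;
         sβ * ω 0, uω, 0, 0, γ * ω 0;
         sβ * ω 1, 0, uω, 0, γ * ω 1;
         sβ * ω 2, 0, 0, uω, γ * ω 2;
         0, γ * ω 0, γ * ω 1, γ * ω 2, uω]
    let BS : Matrix (Fin 5) (Fin 5) ℝ :=
      (1 / ρ) •
        !![0, 0, 0, 0, 0;
           0, ν + (ν + lam) * ω 0 ^ 2, (ν + lam) * ω 0 * ω 1, (ν + lam) * ω 0 * ω 2, 0;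
           0, (ν + lam) * ω 1 * ω 0, ν + (ν + lam) * ω 1 ^ 2, (ν + lam) * ω 1 * ω 2, 0;
           0, (ν + lam) * ω 2 * ω 0, (ν + lam) * ω 2 * ω 1, ν + (ν + lam) * ω 2 ^ 2, 0;
           0, 0, 0, 0, α / eθ]
    BS.PosSemidef ∧
    (∀ ψ : Fin 5 → ℝ, BS *ᵥ ψ = 0 ↔ ∃ t : ℝ, ψ = t • ![1, 0, 0, 0, 0]) ∧
    GenuinelyCoupled AS BS := by
  intro nξ ω β sβ γ uω AS BS
  have hξξ : ξ 0 ^ 2 + ξ 1 ^ 2 + ξ 2 ^ 2 = ξ ⬝ᵥ ξ := by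
    simp only [dotProduct, Fin.sum_univ_three, sq]
  have hω : ω ⬝ᵥ ω = 1 := by
    simpa only [ω, nξ, hξξ] using dotProduct_self_div_sqrt hξ
  have hsβ : sβ ≠ 0 := (Real.sqrt_pos.2 (by positivity)).ne'
  have hBS : BS = (1 / ρ) • viscositySymbol ν lam α eθ ω := rfl
  have hker : ∀ ψ : Fin 5 → ℝ, BS *ᵥ ψ = 0 ↔ ∃ t : ℝ, ψ = t • ![1, 0, 0, 0, 0] := fun ψ => by
    rw [hBS, smul_mulVec, smul_eq_zero_iff_right (one_div_pos.2 hρ).ne',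
      viscositySymbol_mulVec_eq_zero_iff hω hν hlam hα he]
  refine ⟨(viscositySymbol_posSemidef hω hν.le hlam.le hα.le he.le).smul (by positivity), hker,
    .of_ker_eq_span hker fun μ => transportSymbol_mulVec_ne_zero μ uω γ hsβ ?_⟩
  rintro h0
  simp [h0] at hω

/-- For the symmetrized symbols of the linearized three-dimensional
Navier–Stokes–Fourier–Korteweg system, the generalized viscosity symbol `B̄_S(ξ)` is
positive semidefinite with kernel `span{(1,0,0,0,0)}`, and the pair `(A_S(ξ), B̄_S(ξ))`
is genuinely coupled, for every `ξ ≠ 0`. -/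
theorem NSFK_genuinely_coupled (ρ θ₀ pρ k ν lam α eθ pθ : ℝ) (u : Fin 3 → ℝ)
    (hρ : 0 < ρ) (hθ₀ : 0 < θ₀) (hp : 0 < pρ) (hk : 0 < k) (hν : 0 < ν)
    (hlam : 0 < 2 * ν + lam) (hα : 0 < α) (he : 0 < eθ)
    (ξ : Fin 3 → ℝ) (hξ : ξ ≠ 0) :
    let nξ := Real.sqrt (ξ 0 ^ 2 + ξ 1 ^ 2 + ξ 2 ^ 2)
    let ω : Fin 3 → ℝ := fun i => ξ i / nξ
    let β := pρ + k * ρ * (ξ 0 ^ 2 + ξ 1 ^ 2 + ξ 2 ^ 2)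
    let sβ := Real.sqrt β
    let γ := Real.sqrt θ₀ * pθ / (Real.sqrt eθ * ρ)
    let uω := u 0 * ω 0 + u 1 * ω 1 + u 2 * ω 2
    let AS : Matrix (Fin 5) (Fin 5) ℝ :=
      !![uω, sβ * ω 0, sβ * ω 1, sβ * ω 2, 0;
         sβ * ω 0, uω, 0, 0, γ * ω 0;
         sβ * ω 1, 0, uω, 0, γ * ω 1;
         sβ * ω 2, 0, 0, uω, γ * ω 2;
         0, γ * ω 0, γ * ω 1, γ * ω 2, uω]
    let BS : Matrix (Fin 5) (Fin 5) ℝ :=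
      (1 / ρ) •
        !![0, 0, 0, 0, 0;
           0, ν + (ν + lam) * ω 0 ^ 2, (ν + lam) * ω 0 * ω 1, (ν + lam) * ω 0 * ω 2, 0;
           0, (ν + lam) * ω 1 * ω 0, ν + (ν + lam) * ω 1 ^ 2, (ν + lam) * ω 1 * ω 2, 0;
           0, (ν + lam) * ω 2 * ω 0, (ν + lam) * ω 2 * ω 1, ν + (ν + lam) * ω 2 ^ 2, 0;
           0, 0, 0, 0, α / eθ]
    BS.PosSemidef ∧
    (∀ ψ : Fin 5 → ℝ, BS *ᵥ ψ = 0 ↔ ∃ t : ℝ, ψ = t • ![1, 0, 0, 0, 0]) ∧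
    GenuinelyCoupled AS BS :=
  NSFK_genuinely_coupled_general ρ θ₀ pρ k ν lam α eθ pθ u hρ hp hk hν hlam hα he ξ hξ
end
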